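/- For every real x with 0 < x, the integral ∫₀ˣ (1 − cos(ξ)J₀(ξ))/ξ dξ equals −Σ_{n=1}^∞ ((1/4)_n (3/4)_n)/((1/2)_n (1/2)_n) · (−x²)^n / (2n·(n!)²). -/

import Mathlib

/-!
The Cauchy product of the Taylor series of `cos` and `J₀` is `∑ a_m (-t²)^m` with
`a_m = ∑_k 1 / ((2k)! 4^(m-k) ((m-k)!)²)`. Comparing coefficients of `X^(2m)` in
`(1 + X)^(4m) = (X (X + 2) + 1)^(2m)` gives `∑_k 4^k C(2m, m+k) C(m+k, 2k) = C(4m, 2m)`, so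
`a_m = C(4m, 2m) / (4^m (2m)!)`, and the duplication formula `(a)_m (a + 1/2)_m = (2a)_{2m} / 4^m`
identifies this with `(1/4)_m (3/4)_m / ((1/2)_m)² / (m!)²`. As `a_0 = 1`, the integrand is an
odd power series converging absolutely on all of `ℝ`, which is integrated term by term by
dominated convergence.
-/

/-- Bessel function of the first kind of order 0, via its Taylor series. -/
noncomputable def besselJ0 (x : ℝ) : ℝ :=
  ∑' n : ℕ, (-1) ^ n * (x / 2) ^ (2 * n) / (Nat.factorial n : ℝ) ^ 2

/-- Pochhammer (rising factorial) symbol for real argument. -/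
noncomputable def poch (a : ℝ) (n : ℕ) : ℝ := ∏ i ∈ Finset.range n, (a + i)

open Finset Nat Polynomial
open scoped Interval

theorem sum_four_pow_mul_choose_mul_choose (n : ℕ) :
    ∑ k ∈ range (n + 1), 4 ^ k * (2 * n).choose (n + k) * (n + k).choose (2 * k)
      = (4 * n).choose (2 * n) := by
  have hsq : ((X + 1 : ℕ[X]) ^ 2) = X * (X + C 2) + 1 := by
    simp only [C_ofNat]
    ring
  have h := coeff_X_add_C_pow (1 : ℕ) (4 * n) (2 * n)
  rw [C_1, show 4 * n = 2 * (2 * n) by ring, pow_mul, hsq, add_pow] at h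
  simp only [one_pow, mul_one, mul_pow, finsetSum_coeff, ← C_eq_natCast, coeff_mul_C,
    coeff_X_pow_mul', coeff_X_add_C_pow, Nat.cast_id, one_mul] at h
  rw [show 2 * n + 1 = n + (n + 1) by ring, sum_range_add, sum_eq_zero, zero_add] at h
  · rw [show 4 * n = 2 * (2 * n) by ring, ← h]
    refine sum_congr rfl fun k hk => ?_
    have hk : k ≤ n := Nat.lt_succ_iff.mp (mem_range.mp hk)
    rw [if_pos (by omega), show n + k - (2 * n - (n + k)) = 2 * k by omega, pow_mul,
      show 2 * n - (n + k) = n - k by omega,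
      ← choose_symm_of_eq_add (by omega : n + k = 2 * k + (n - k))]
    ring
  · intro j hj
    rw [choose_eq_zero_of_lt (by simp at hj; omega)]
    simp

theorem choose_mul_choose_mul_factorial_eq_factorial {n k : ℕ} (hk : k ≤ n) :
    (2 * n).choose (n + k) * (n + k).choose (2 * k) * ((2 * k)! * (n - k)! * (n - k)!)
      = (2 * n)! := by
  have h1 := choose_mul_factorial_mul_factorial (by omega : n + k ≤ 2 * n)
  have h2 := choose_mul_factorial_mul_factorial (by omega : 2 * k ≤ n + k)
  rw [show 2 * n - (n + k) = n - k by omega] at h1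
  rw [show n + k - 2 * k = n - k by omega] at h2
  rw [← h1, ← h2]
  ring

theorem poch_one (m : ℕ) : poch 1 m = m ! := by
  simp only [poch, add_comm (1 : ℝ)]
  exact_mod_cast prod_range_add_one_eq_factorial m

theorem poch_mul_poch_add_half (a : ℝ) (m : ℕ) :
    poch a m * poch (a + 1 / 2) m = poch (2 * a) (2 * m) / 4 ^ m := by
  induction m with
  | zero => simp [poch]
  | succ m ih =>
    simp only [poch, Nat.mul_succ, prod_range_succ] at ih ⊢
    rw [mul_mul_mul_comm, ih, pow_succ]
    push_cast
    field_simp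
    ring

theorem poch_half_mul_factorial (m : ℕ) : poch (1 / 2) m * m ! = (2 * m)! / 4 ^ m := by
  have h := poch_mul_poch_add_half (1 / 2) m
  norm_num [poch_one] at h
  exact h

noncomputable def cosBesselCoeff (m : ℕ) : ℝ :=
  poch (1 / 4) m * poch (3 / 4) m / (poch (1 / 2) m * poch (1 / 2) m) / (m ! : ℝ) ^ 2

theorem cosBesselCoeff_eq_choose (m : ℕ) :
    cosBesselCoeff m = (4 * m).choose (2 * m) / (4 ^ m * (2 * m)! : ℝ) := by
  have hquarter : poch (1 / 4) m * poch (3 / 4) m = poch (1 / 2) (2 * m) / 4 ^ m := by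
    convert poch_mul_poch_add_half (1 / 4) m using 3 <;> norm_num
  have hhalf (m : ℕ) : poch (1 / 2) m = (2 * m)! / (4 ^ m * m !) := by
    rw [eq_div_iff (by positivity), ← mul_assoc, mul_right_comm, poch_half_mul_factorial]
    field_simp
  rw [cosBesselCoeff, hquarter, hhalf, hhalf, Nat.cast_choose ℝ (by omega),
    show 4 * m - 2 * m = 2 * m by omega, show 2 * (2 * m) = 4 * m by ring]
  field_simp
  ring

theorem sum_one_div_factorial_mul_four_pow_eq_cosBesselCoeff (m : ℕ) :
    ∑ k ∈ range (m + 1), 1 / ((2 * k)! * 4 ^ (m - k) * ((m - k)! : ℝ) ^ 2)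
      = cosBesselCoeff m := by
  have hterm : ∀ k ∈ range (m + 1), 1 / ((2 * k)! * 4 ^ (m - k) * ((m - k)! : ℝ) ^ 2)
      = (4 ^ k * (2 * m).choose (m + k) * (m + k).choose (2 * k) : ℕ) / (4 ^ m * (2 * m)! : ℝ) := by
    intro k hk
    have hk : k ≤ m := Nat.lt_succ_iff.mp (mem_range.mp hk)
    have h4 : (4 : ℝ) ^ m = 4 ^ k * 4 ^ (m - k) := by rw [← pow_add, Nat.add_sub_cancel' hk]
    have hc₁ : ((2 * m).choose (m + k) : ℝ) ≠ 0 := mod_cast (choose_pos (by omega)).ne'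
    have hc₂ : ((m + k).choose (2 * k) : ℝ) ≠ 0 := mod_cast (choose_pos (by omega)).ne'
    rw [← choose_mul_choose_mul_factorial_eq_factorial hk, h4]
    push_cast
    field_simp
  rw [sum_congr rfl hterm, ← sum_div, ← Nat.cast_sum, sum_four_pow_mul_choose_mul_choose,
    cosBesselCoeff_eq_choose]

theorem summable_norm_cos_series (t : ℝ) :
    Summable fun k : ℕ => ‖(-1) ^ k * t ^ (2 * k) / (2 * k)!‖ := by
  simpa [abs_pow, pow_mul] using (Real.hasSum_cosh |t|).summable

theorem summable_norm_besselJ0_series (t : ℝ) :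
    Summable fun k : ℕ => ‖(-1) ^ k * (t / 2) ^ (2 * k) / (k ! : ℝ) ^ 2‖ := by
  refine (Real.summable_pow_div_factorial ((t / 2) ^ 2)).of_norm_bounded fun k => ?_
  have hk : (1 : ℝ) ≤ k ! := mod_cast k.factorial_pos
  rw [norm_norm, norm_div, norm_mul, norm_pow, norm_neg, norm_one, one_pow, one_mul, pow_mul,
    Real.norm_of_nonneg (by positivity), Real.norm_of_nonneg (by positivity)]
  gcongr
  nlinarith

theorem sum_range_cos_series_mul_besselJ0_series (t : ℝ) (m : ℕ) :
    ∑ k ∈ range (m + 1), (-1) ^ k * t ^ (2 * k) / (2 * k)! *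
      ((-1) ^ (m - k) * (t / 2) ^ (2 * (m - k)) / ((m - k)! : ℝ) ^ 2)
      = cosBesselCoeff m * (-t ^ 2) ^ m := by
  rw [← sum_one_div_factorial_mul_four_pow_eq_cosBesselCoeff, sum_mul]
  refine sum_congr rfl fun k hk => ?_
  obtain ⟨j, rfl⟩ := Nat.exists_eq_add_of_le (Nat.lt_succ_iff.mp (mem_range.mp hk))
  rw [Nat.add_sub_cancel_left, div_pow, pow_mul 2 2,
    show (-t ^ 2) ^ (k + j) = (-1) ^ k * (-1) ^ j * t ^ (2 * k) * t ^ (2 * j) by ring]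
  field_simp
  norm_num

theorem hasSum_cos_mul_besselJ0 (t : ℝ) :
    HasSum (fun m => cosBesselCoeff m * (-t ^ 2) ^ m) (Real.cos t * besselJ0 t) := by
  have h := hasSum_sum_range_mul_of_summable_norm (summable_norm_cos_series t)
    (summable_norm_besselJ0_series t)
  rw [besselJ0, Real.cos_eq_tsum]
  simpa only [sum_range_cos_series_mul_besselJ0_series] using h

theorem summable_norm_cosBesselCoeff_mul (t : ℝ) :
    Summable fun m => ‖cosBesselCoeff m * (-t ^ 2) ^ m‖ := by
  simpa only [sum_range_cos_series_mul_besselJ0_series] using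
    summable_norm_sum_mul_range_of_summable_norm (summable_norm_cos_series t)
      (summable_norm_besselJ0_series t)

theorem hasSum_one_sub_cos_mul_besselJ0_div (t : ℝ) :
    HasSum (fun n => cosBesselCoeff (n + 1) * (-1) ^ n * t ^ (2 * n + 1))
      ((1 - Real.cos t * besselJ0 t) / t) := by
  have hcoeff_zero : cosBesselCoeff 0 = 1 := by simp [cosBesselCoeff, poch]
  have h := ((hasSum_nat_add_iff' 1).mpr (hasSum_cos_mul_besselJ0 t)).neg.div_const t
  rw [sum_range_one, pow_zero, hcoeff_zero, mul_one, neg_sub] at h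
  refine h.congr_fun fun n => ?_
  rcases eq_or_ne t 0 with rfl | ht
  · simp
  · field_simp
    ring

theorem intervalIntegral.integral_tsum_mul_pow {c : ℕ → ℝ} {p : ℕ → ℕ} {x : ℝ} (hx : 0 ≤ x)
    (hc : Summable fun n => |c n| * x ^ p n) :
    ∫ t in 0..x, ∑' n, c n * t ^ p n = ∑' n, c n * (x ^ (p n + 1) / (p n + 1)) := by
  have hbound : ∀ n, ∀ t ∈ Ι 0 x, ‖c n * t ^ p n‖ ≤ |c n| * x ^ p n := by
    intro n t ht
    rw [Set.uIoc_of_le hx] at ht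
    rw [norm_mul, norm_pow, Real.norm_eq_abs, Real.norm_eq_abs, abs_of_pos ht.1]
    exact mul_le_mul_of_nonneg_left (pow_le_pow_left₀ ht.1.le ht.2 _) (abs_nonneg _)
  have h := hasSum_integral_of_dominated_convergence (μ := MeasureTheory.volume)
    (fun n _ => |c n| * x ^ p n) (fun n => by fun_prop) (fun n => .of_forall (hbound n))
    (.of_forall fun _ _ => hc) intervalIntegrable_const
    (.of_forall fun t ht => (hc.of_norm_bounded (hbound · t ht)).hasSum)
  simp only [integral_const_mul, integral_pow, zero_pow (succ_ne_zero _), sub_zero] at h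
  exact h.tsum_eq.symm

theorem CJin_series (x : ℝ) (hx : 0 < x) :
    ∫ ξ in (0:ℝ)..x, (1 - Real.cos ξ * besselJ0 ξ) / ξ =
      -∑' n : ℕ, (poch (1/4) (n+1) * poch (3/4) (n+1)) / (poch (1/2) (n+1) * poch (1/2) (n+1))
        * (-(x ^ 2)) ^ (n+1) / (2 * ((n : ℝ) + 1) * (Nat.factorial (n+1) : ℝ) ^ 2) := by
  have hsummable : Summable fun n => |cosBesselCoeff (n + 1) * (-1) ^ n| * x ^ (2 * n + 1) := by
    refine (((summable_nat_add_iff 1).mpr (summable_norm_cosBesselCoeff_mul x)).div_const x).congr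
      fun n => ?_
    simp only [norm_mul, norm_pow, norm_neg, Real.norm_eq_abs, abs_mul, abs_pow, abs_neg, abs_one,
      one_pow, mul_one, abs_of_pos hx]
    field_simp
    ring
  simp_rw [fun t => (hasSum_one_sub_cos_mul_besselJ0_div t).tsum_eq.symm]
  rw [intervalIntegral.integral_tsum_mul_pow hx.le hsummable, ← tsum_neg]
  refine tsum_congr fun n => ?_
  simp only [cosBesselCoeff]
  push_cast
  field_simp
  ring
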